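/- Let M(α) be the Λ₁-module k² with α(x,y) = (0,x) and δ = 0. Then: (i) End_{Λ₁}(M(α)) is two-dimensional over k, spanned by the identity and the nilpotent endomorphism ν(x,y) = (0,x); (ii) ν factors through the projective (free rank-one) Λ₁-module Λ₁: explicitly ν = h∘g where g : M(α) → Λ₁, g(x,y) = xα + yα², and h : Λ₁ → M(α) is the Λ₁-homomorphism with h(1) = (1,0); (iii) the identity of M(α) does not factor through any projective Λ₁-module. Consequently the stable endomorphism ring of M(α) is isomorphic to k. -/

import Mathlib

/-! Common framework: modules over the generalized Brauer star algebra with one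
edge, `Λ₁ = k⟨α,δ⟩/(αδ, δα, α² − δ²)`, encoded as a module `V` together with two
endomorphisms `A` (the action of `α`) and `D` (the action of `δ`). -/

namespace GBTAone

structure Mod1 (R : Type) [CommRing R] : Type 1 where
  V : Type
  [instAdd : AddCommGroup V]
  [instMod : Module R V]
  A : Module.End R V
  D : Module.End R V

attribute [instance] Mod1.instAdd Mod1.instMod

variable {R : Type} [CommRing R]

/-- The defining relations of `Λ₁`: `αδ = δα = 0` and `α² = δ²`. -/
def Satisfies1 (ρ : Mod1 R) : Prop :=
  ρ.A * ρ.D = 0 ∧ ρ.D * ρ.A = 0 ∧ ρ.A * ρ.A = ρ.D * ρ.D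

/-- The space of `Λ₁`-module homomorphisms `ρ → σ`. -/
def homSet1 (ρ σ : Mod1 R) : Submodule R (ρ.V →ₗ[R] σ.V) where
  carrier := {f | f ∘ₗ ρ.A = σ.A ∘ₗ f ∧ f ∘ₗ ρ.D = σ.D ∘ₗ f}
  add_mem' := by
    rintro f g ⟨hfa, hfd⟩ ⟨hga, hgd⟩
    exact ⟨by simp only [LinearMap.add_comp, LinearMap.comp_add, hfa, hga],
      by simp only [LinearMap.add_comp, LinearMap.comp_add, hfd, hgd]⟩
  zero_mem' := ⟨by simp, by simp⟩
  smul_mem' := by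
    rintro c f ⟨hfa, hfd⟩
    exact ⟨by simp only [LinearMap.smul_comp, LinearMap.comp_smul, hfa],
      by simp only [LinearMap.smul_comp, LinearMap.comp_smul, hfd]⟩

/-- Projectivity of a `Λ₁`-module, via the lifting property in the category of
`Λ₁`-modules. -/
def IsProjective1 (P : Mod1 R) : Prop :=
  Satisfies1 P ∧
  ∀ (A B : Mod1 R), Satisfies1 A → Satisfies1 B →
    ∀ p ∈ homSet1 A B, Function.Surjective p →
      ∀ g ∈ homSet1 P B, ∃ h ∈ homSet1 P A, p ∘ₗ h = g

/-- An endomorphism `f` of `ρ` factors through a projective `Λ₁`-module. -/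
def FactorsThroughProjective1 (ρ : Mod1 R) (f : ρ.V →ₗ[R] ρ.V) : Prop :=
  ∃ P : Mod1 R, IsProjective1 P ∧ ∃ g ∈ homSet1 ρ P, ∃ h ∈ homSet1 P ρ, f = h ∘ₗ g

/-- "The stable endomorphism ring of `ρ` is isomorphic to the scalars". -/
def StableEndIsoScalars1 (ρ : Mod1 R) : Prop :=
  (¬ FactorsThroughProjective1 ρ LinearMap.id) ∧
  ∀ f ∈ homSet1 ρ ρ, ∃ c : R, FactorsThroughProjective1 ρ (f - c • LinearMap.id)

/-- The linear map on `Fin m → W` sending the `src` coordinate to the `dst`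
coordinate through `g`, and killing all other coordinates. -/
def mk1 {m : ℕ} {W : Type} [AddCommGroup W] [Module R W] (src dst : Fin m)
    (g : W →ₗ[R] W) : (Fin m → W) →ₗ[R] (Fin m → W) where
  toFun x := fun r => if r = dst then g (x src) else 0
  map_add' x y := by funext r; by_cases h : r = dst <;> simp [h]
  map_smul' c x := by funext r; by_cases h : r = dst <;> simp [h]

/-- The map `(x, y) ↦ (0, x)` on `W × W`. -/
def sh (R W : Type) [CommRing R] [AddCommGroup W] [Module R W] :
    (W × W) →ₗ[R] (W × W) :=
  LinearMap.prod 0 (LinearMap.fst R W W)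

/-- The module `M(α)`: `k²` with `α(x,y) = (0,x)` and `δ = 0`. -/
@[reducible] def Malpha (k : Type) [CommRing k] : Mod1 k where
  V := k × k
  A := sh k k
  D := 0

/-- The module `M(δ)`: `k²` with `δ(x,y) = (0,x)` and `α = 0`. -/
@[reducible] def Mdelta (k : Type) [CommRing k] : Mod1 k where
  V := k × k
  A := 0
  D := sh k k

/-- The regular module `Λ₁`, with basis `1, α, δ, α²` (coordinates `0,1,2,3`). -/
@[reducible] def reg (k : Type) [CommRing k] : Mod1 k where
  V := Fin 4 → k
  A := mk1 0 1 LinearMap.id + mk1 1 3 LinearMap.id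
  D := mk1 0 2 LinearMap.id + mk1 2 3 LinearMap.id

/-- The simple `Λ₁`-module `S₁`. -/
@[reducible] def S1 (k : Type) [CommRing k] : Mod1 k where
  V := k
  A := 0
  D := 0


/-- The map `g : M(α) → Λ₁`, `(x,y) ↦ x·α + y·α²`. -/
def g6 (k : Type) [CommRing k] : (k × k) →ₗ[k] (Fin 4 → k) where
  toFun p := fun r => if r = 1 then p.1 else if r = 3 then p.2 else 0
  map_add' p q := by
    funext r; by_cases h1 : r = 1 <;> by_cases h3 : r = 3 <;> simp [h1, h3]
  map_smul' c p := by
    funext r; by_cases h1 : r = 1 <;> by_cases h3 : r = 3 <;> simp [h1, h3]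

/-- The `Λ₁`-homomorphism `h : Λ₁ → M(α)` with `h(1) = (1,0)`. -/
def h6 (k : Type) [CommRing k] : (Fin 4 → k) →ₗ[k] (k × k) :=
  LinearMap.prod (LinearMap.proj 0) (LinearMap.proj 1)


/-! The regular module is free on `1`, hence projective, and `ν = h ∘ g` factors through it;
since every endomorphism of `M(α)` is `c₁ • id + c₂ • ν`, only the identity remains. If the
identity factored through a projective, it would lift along the surjection `h : Λ₁ → M(α)`,
giving a `Λ₁`-linear section `s` of `h`. Then `s (1, 0)` has coefficient `1` at `1 ∈ Λ₁`, so `δ`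
does not kill it, whereas `δ` kills `(1, 0)`. -/

lemma comp_mem_homSet1 {ρ σ τ : Mod1 R} {f : σ.V →ₗ[R] τ.V} {g : ρ.V →ₗ[R] σ.V}
    (hf : f ∈ homSet1 σ τ) (hg : g ∈ homSet1 ρ σ) : f ∘ₗ g ∈ homSet1 ρ τ :=
  ⟨by rw [LinearMap.comp_assoc, hg.1, ← LinearMap.comp_assoc, hf.1, LinearMap.comp_assoc],
    by rw [LinearMap.comp_assoc, hg.2, ← LinearMap.comp_assoc, hf.2, LinearMap.comp_assoc]⟩

lemma homSet1_apply_A {ρ σ : Mod1 R} {f : ρ.V →ₗ[R] σ.V} (hf : f ∈ homSet1 ρ σ) (v : ρ.V) :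
    f (ρ.A v) = σ.A (f v) :=
  LinearMap.congr_fun hf.1 v

lemma homSet1_apply_D {ρ σ : Mod1 R} {f : ρ.V →ₗ[R] σ.V} (hf : f ∈ homSet1 ρ σ) (v : ρ.V) :
    f (ρ.D v) = σ.D (f v) :=
  LinearMap.congr_fun hf.2 v

lemma Satisfies1.A_D_apply {M : Mod1 R} (hM : Satisfies1 M) (v : M.V) : M.A (M.D v) = 0 :=
  LinearMap.congr_fun hM.1 v

lemma Satisfies1.D_A_apply {M : Mod1 R} (hM : Satisfies1 M) (v : M.V) : M.D (M.A v) = 0 :=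
  LinearMap.congr_fun hM.2.1 v

lemma Satisfies1.A_A_apply {M : Mod1 R} (hM : Satisfies1 M) (v : M.V) :
    M.A (M.A v) = M.D (M.D v) :=
  LinearMap.congr_fun hM.2.2 v

lemma mk1_apply {m : ℕ} {W : Type} [AddCommGroup W] [Module R W] (src dst : Fin m)
    (g : W →ₗ[R] W) (x : Fin m → W) (r : Fin m) :
    mk1 src dst g x r = if r = dst then g (x src) else 0 := rfl

lemma satisfies1_reg : Satisfies1 (reg R) := by
  refine ⟨?_, ?_, ?_⟩ <;>
  · ext x r
    fin_cases r <;> simp [Module.End.mul_apply, mk1_apply, Pi.single_apply]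

/-- `x ↦ x • a`, the `Λ₁`-linear map `Λ₁ → M` sending `1` to `a`. -/
def regLift (M : Mod1 R) (a : M.V) : (Fin 4 → R) →ₗ[R] M.V :=
  (LinearMap.proj 0).smulRight a + (LinearMap.proj 1).smulRight (M.A a) +
    (LinearMap.proj 2).smulRight (M.D a) + (LinearMap.proj 3).smulRight (M.A (M.A a))

lemma regLift_apply (M : Mod1 R) (a : M.V) (x : Fin 4 → R) :
    regLift M a x = x 0 • a + x 1 • M.A a + x 2 • M.D a + x 3 • M.A (M.A a) := rfl

lemma regLift_mem_homSet1 {M : Mod1 R} (hM : Satisfies1 M) (a : M.V) :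
    regLift M a ∈ homSet1 (reg R) M := by
  have hDDD : M.D (M.D (M.D a)) = 0 := by rw [← hM.A_A_apply, hM.A_D_apply, map_zero]
  constructor <;>
  · refine LinearMap.ext fun x => ?_
    simp [regLift_apply, mk1_apply, hM.A_D_apply, hM.D_A_apply, hM.A_A_apply a, hDDD]

lemma comp_regLift {M N : Mod1 R} {f : M.V →ₗ[R] N.V} (hf : f ∈ homSet1 M N) (a : M.V) :
    f ∘ₗ regLift M a = regLift N (f a) := by
  ext x
  simp [regLift_apply, homSet1_apply_A hf, homSet1_apply_D hf]

lemma eq_regLift {M : Mod1 R} {g : (Fin 4 → R) →ₗ[R] M.V} (hg : g ∈ homSet1 (reg R) M) :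
    g = regLift M (g (Pi.single 0 1)) := by
  have h1 : Pi.single (M := fun _ => R) 1 1 = (reg R).A (Pi.single 0 1) := by
    ext r; fin_cases r <;> simp [mk1_apply]
  have h2 : Pi.single (M := fun _ => R) 2 1 = (reg R).D (Pi.single 0 1) := by
    ext r; fin_cases r <;> simp [mk1_apply]
  have h3 : Pi.single (M := fun _ => R) 3 1 = (reg R).A (Pi.single 1 1) := by
    ext r; fin_cases r <;> simp [mk1_apply]
  have key : ∀ i, g (Pi.single i 1) = regLift M (g (Pi.single 0 1)) (Pi.single i 1) := by
    intro i
    obtain rfl | rfl | rfl | rfl : i = 0 ∨ i = 1 ∨ i = 2 ∨ i = 3 := by fin_cases i <;> simp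
    · simp [regLift_apply]
    · rw [h1, homSet1_apply_A hg]; simp [regLift_apply, mk1_apply]
    · rw [h2, homSet1_apply_D hg]; simp [regLift_apply, mk1_apply]
    · rw [h3, homSet1_apply_A hg, h1, homSet1_apply_A hg]; simp [regLift_apply, mk1_apply]
  ext i
  exact key i

lemma isProjective1_reg : IsProjective1 (reg R) := by
  refine ⟨satisfies1_reg, fun A B hA _ p hp hsurj g hg => ?_⟩
  obtain ⟨a, ha⟩ := hsurj (g (Pi.single 0 1))
  exact ⟨regLift A a, regLift_mem_homSet1 hA a, by rw [comp_regLift hp, ha, ← eq_regLift hg]⟩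

lemma sh_apply (W : Type) [AddCommGroup W] [Module R W] (p : W × W) :
    sh R W p = (0, p.1) := rfl

lemma satisfies1_Malpha : Satisfies1 (Malpha R) := by
  refine ⟨mul_zero _, zero_mul _, ?_⟩
  ext <;> simp [Module.End.mul_apply, sh_apply]

lemma id_mem_homSet1 (ρ : Mod1 R) : LinearMap.id ∈ homSet1 ρ ρ :=
  ⟨rfl, rfl⟩

lemma sh_mem_homSet1_Malpha : sh R R ∈ homSet1 (Malpha R) (Malpha R) :=
  ⟨rfl, by simp⟩

lemma eq_of_mem_homSet1_Malpha {f : R × R →ₗ[R] R × R}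
    (hf : f ∈ homSet1 (Malpha R) (Malpha R)) :
    f = (f (1, 0)).1 • LinearMap.id + (f (1, 0)).2 • sh R R := by
  have hf01 : f (0, 1) = (0, (f (1, 0)).1) := by
    simpa [sh_apply] using (homSet1_apply_A hf (1, 0))
  ext <;> simp [hf01, sh_apply]

def endMalphaEquiv : homSet1 (Malpha R) (Malpha R) ≃ₗ[R] R × R where
  toFun f := f.1 (1, 0)
  invFun p := ⟨p.1 • LinearMap.id + p.2 • sh R R,
    add_mem (Submodule.smul_mem _ _ (id_mem_homSet1 _))
      (Submodule.smul_mem _ _ sh_mem_homSet1_Malpha)⟩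
  map_add' _ _ := rfl
  map_smul' _ _ := rfl
  left_inv f := Subtype.ext (eq_of_mem_homSet1_Malpha f.2).symm
  right_inv p := by simp [sh_apply]

lemma finrank_homSet1_Malpha [Nontrivial R] :
    Module.finrank R (homSet1 (Malpha R) (Malpha R)) = 2 := by
  simp [endMalphaEquiv.finrank_eq]

lemma g6_mem_homSet1 : g6 R ∈ homSet1 (Malpha R) (reg R) := by
  constructor <;>
  · refine LinearMap.ext fun p => funext fun r => ?_
    fin_cases r <;> simp [g6, mk1_apply, sh_apply]

lemma h6_mem_homSet1 : h6 R ∈ homSet1 (reg R) (Malpha R) := by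
  constructor <;>
  · ext x <;> simp [h6, mk1_apply, sh_apply]

lemma sh_eq_h6_comp_g6 : sh R R = h6 R ∘ₗ g6 R := by
  ext <;> simp [h6, g6, sh_apply]

lemma h6_surjective : Function.Surjective (h6 R) :=
  fun q => ⟨![q.1, q.2, 0, 0], rfl⟩

lemma factorsThroughProjective1_smul_sh (c : R) :
    FactorsThroughProjective1 (Malpha R) (c • sh R R) :=
  ⟨reg R, isProjective1_reg, c • g6 R, Submodule.smul_mem _ c g6_mem_homSet1,
    h6 R, h6_mem_homSet1, by rw [LinearMap.comp_smul, ← sh_eq_h6_comp_g6]⟩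

lemma FactorsThroughProjective1.exists_lift {ρ Q : Mod1 R} {f : ρ.V →ₗ[R] ρ.V}
    (hf : FactorsThroughProjective1 ρ f) (hρ : Satisfies1 ρ) (hQ : Satisfies1 Q)
    {q : Q.V →ₗ[R] ρ.V} (hq : q ∈ homSet1 Q ρ) (hsurj : Function.Surjective q) :
    ∃ s ∈ homSet1 ρ Q, q ∘ₗ s = f := by
  obtain ⟨P, ⟨-, hP⟩, g, hg, h, hh, rfl⟩ := hf
  obtain ⟨h', hh', hqh'⟩ := hP Q ρ hQ hρ q hq hsurj h hh
  exact ⟨h' ∘ₗ g, comp_mem_homSet1 hh' hg, by rw [← LinearMap.comp_assoc, hqh']⟩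

lemma not_exists_section_h6 [Nontrivial R] :
    ¬ ∃ s ∈ homSet1 (Malpha R) (reg R), h6 R ∘ₗ s = LinearMap.id := by
  rintro ⟨s, hs, hsec⟩
  have hs0 : s (1, 0) 0 = 1 := congrArg Prod.fst (LinearMap.congr_fun hsec (1, 0))
  -- `δ (1, 0) = 0` in `M(α)`, while in `Λ₁` the `δ`-coordinate of `δ x` is `x 0`.
  have hδ : (reg R).D (s (1, 0)) 2 = 0 := by simp [← homSet1_apply_D hs]; rfl
  simp [mk1_apply, hs0] at hδ

lemma not_factorsThroughProjective1_id_Malpha [Nontrivial R] :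
    ¬ FactorsThroughProjective1 (Malpha R) LinearMap.id := fun h =>
  not_exists_section_h6
    (h.exists_lift satisfies1_Malpha satisfies1_reg h6_mem_homSet1 h6_surjective)

lemma stableEndIsoScalars1_Malpha [Nontrivial R] : StableEndIsoScalars1 (Malpha R) := by
  refine ⟨not_factorsThroughProjective1_id_Malpha, fun f hf => ⟨(f (1, 0)).1, ?_⟩⟩
  have hν := factorsThroughProjective1_smul_sh (f (1, 0)).2
  rwa [← add_sub_cancel_left ((f (1, 0)).1 • LinearMap.id) ((f (1, 0)).2 • sh R R),
    ← eq_of_mem_homSet1_Malpha hf] at hν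

/-- `End_{Λ₁}(M(α))` is two-dimensional, spanned by the identity
and the nilpotent endomorphism `ν(x,y) = (0,x)`; `ν` factors through the
projective free rank-one module `Λ₁` as `ν = h ∘ g`; the identity of `M(α)` does
not factor through any projective `Λ₁`-module; consequently the stable
endomorphism ring of `M(α)` is isomorphic to `k`. -/
theorem Malpha_stable_end (k : Type) [Field k] :
    (Module.finrank k (homSet1 (Malpha k) (Malpha k)) = 2 ∧
      ∀ f ∈ homSet1 (Malpha k) (Malpha k), ∃ c₁ c₂ : k,
        f = c₁ • LinearMap.id + c₂ • sh k k) ∧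
    (IsProjective1 (reg k) ∧ g6 k ∈ homSet1 (Malpha k) (reg k) ∧
      h6 k ∈ homSet1 (reg k) (Malpha k) ∧ sh k k = h6 k ∘ₗ g6 k) ∧
    (¬ FactorsThroughProjective1 (Malpha k) LinearMap.id) ∧
    StableEndIsoScalars1 (Malpha k) :=
  ⟨⟨finrank_homSet1_Malpha, fun _ hf => ⟨_, _, eq_of_mem_homSet1_Malpha hf⟩⟩,
    ⟨isProjective1_reg, g6_mem_homSet1, h6_mem_homSet1, sh_eq_h6_comp_g6⟩,
    not_factorsThroughProjective1_id_Malpha, stableEndIsoScalars1_Malpha⟩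

end GBTAone
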